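/- Let m ≥ n+2 and let J = (j_1, …, j_{n+2}) be n+2 distinct indices from {1, …, m}. Then: (i) B(0 J) = 0 (the Cayley–Menger determinant of n+2 points in ℝ^n vanishes); and (ii) for every x ∈ ℂ^n, B(0 ⋆ J) = Σ_{ν=1}^{n+2} B(0 ⋆ ∂_{j_ν} J ; 0 j_ν ∂_{j_ν} J) · f_{j_ν}(x). Equivalently, on the complement of the spheres one has the partial fraction expansion B(0⋆J)/∏_{j∈J} f_j(x) = Σ_{ν=1}^{n+2} B(0 ⋆ ∂_{j_ν} J ; 0 j_ν ∂_{j_ν} J)/∏_{j∈∂_{j_ν}J} f_j(x). -/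

import Mathlib

/-!
Both identities are rank arguments. Expanding `ρ_{jk}² = Q(α_j) + Q(α_k) − 2(α_j, α_k)`
writes `B(0J)` as a product of an `(n+3) × (n+2)` and an `(n+2) × (n+3)` matrix, so it is
singular. For (ii), replace the `⋆` column `(1, 0, r_j²)` of `B(0⋆J)` by
`(1, 0, r_j² + f_j(x)) = (1, 0, Q(x + α_j))`: the new matrix factors through `ℂ^{n+3}` and
has determinant zero. By linearity in that column, `B(0⋆J)` is minus the determinant with
`⋆` column `(0, 0, f_j(x))`, and expanding along that column gives the sum; the sign `(-1)^ν`
of each cofactor is undone by moving column `j_ν` to the front.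
-/

inductive CMIdx (m : ℕ) : Type
  | zero : CMIdx m
  | star : CMIdx m
  | pt : Fin m → CMIdx m

/-- Entry of the Cayley–Menger matrix with squared radii `rsq` and squared distances `ρsq`. -/
def cmEnt {m : ℕ} (rsq : Fin m → ℝ) (ρsq : Fin m → Fin m → ℝ) : CMIdx m → CMIdx m → ℝ
  | CMIdx.zero, CMIdx.zero => 0
  | CMIdx.zero, _ => 1
  | _, CMIdx.zero => 1
  | CMIdx.star, CMIdx.star => 0
  | CMIdx.star, CMIdx.pt j => rsq j
  | CMIdx.pt j, CMIdx.star => rsq j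
  | CMIdx.pt j, CMIdx.pt k => if j = k then 0 else ρsq j k

/-- Minor `B(rows ; cols)` of the Cayley–Menger matrix. -/
noncomputable def cmMinor {m : ℕ} (rsq : Fin m → ℝ) (ρsq : Fin m → Fin m → ℝ)
    (rows cols : List (CMIdx m)) : ℝ :=
  if h : rows.length = cols.length then
    Matrix.det (Matrix.of fun i j : Fin rows.length =>
      cmEnt rsq ρsq (rows.get i) (cols.get (Fin.cast h j)))
  else 0

/-- `r_j² = Q(α_j) − α_{j0}`. -/
def sphereRsq {n m : ℕ} (α : Fin m → Fin n → ℝ) (α0 : Fin m → ℝ) : Fin m → ℝ :=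
  fun j => (∑ ν, α j ν ^ 2) - α0 j

/-- `ρ_{jk}² = Q(α_j − α_k)`. -/
def sphereRhosq {n m : ℕ} (α : Fin m → Fin n → ℝ) : Fin m → Fin m → ℝ :=
  fun j k => ∑ ν, (α j ν - α k ν) ^ 2

/-- The complex quadric `f_j(x) = Q(x) + 2(α_j, x) + α_{j0}`. -/
noncomputable def sphereFun {n m : ℕ} (α : Fin m → Fin n → ℝ) (α0 : Fin m → ℝ)
    (j : Fin m) (x : Fin n → ℂ) : ℂ :=
  (∑ ν, x ν ^ 2) + 2 * (∑ ν, (α j ν : ℂ) * x ν) + (α0 j : ℂ)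

open Matrix

theorem Matrix.det_of_dotProduct_eq_zero_of_card_lt {ι κ K : Type*} [Fintype ι] [DecidableEq ι]
    [Fintype κ] [Field K] (u w : ι → κ → K) (h : Fintype.card κ < Fintype.card ι) :
    det (of fun i j => u i ⬝ᵥ w j) = 0 := by
  have hmul : (of fun i j => u i ⬝ᵥ w j) = of u * (of w)ᵀ := rfl
  by_contra hdet
  have hrank := rank_of_isUnit _ ((isUnit_iff_isUnit_det _).2 (Ne.isUnit hdet))
  rw [hmul] at hrank
  have := (rank_mul_le_left (of u) (of w)ᵀ).trans (rank_le_card_width (of u))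
  omega

theorem Matrix.det_eq_sum_of_det_updateCol_add_eq_zero {R : Type*} [CommRing R] {k : ℕ}
    (A : Matrix (Fin (k + 2)) (Fin (k + 2)) R) (c : Fin k → R)
    (h : det (A.updateCol 1 fun i => A i 1 + vecCons 0 (vecCons 0 c) i) = 0) :
    det A = ∑ t : Fin k,
      (-1) ^ (t : ℕ) * c t * det (A.submatrix t.succ.succ.succAbove (Fin.succAbove 1)) := by
  rw [← Pi.add_def, det_updateCol_add, updateCol_eq_self] at h
  rw [eq_neg_of_add_eq_zero_left h, det_succ_column _ 1, Fin.sum_univ_succ, Fin.sum_univ_succ]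
  simp [submatrix_updateCol_succAbove, ← Finset.sum_neg_distrib, pow_succ]

theorem Matrix.det_submatrix_cons_zero_cons_succ_succAbove {R : Type*} [CommRing R] {k : ℕ}
    (M : Matrix (Fin (k + 2)) (Fin (k + 2)) R) (ν : Fin (k + 1)) :
    det (M.submatrix id (Fin.cons 0 (Fin.cons ν.succ fun t => (ν.succAbove t).succ))) =
      (-1) ^ (ν : ℕ) * det M := by
  have hσ : (Fin.cons 0 (Fin.cons ν.succ fun t => (ν.succAbove t).succ) :
      Fin (k + 2) → Fin (k + 2)) = Equiv.Perm.decomposeFin.symm (0, (Fin.cycleRange ν).symm) := by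
    ext b
    refine Fin.cases ?_ (fun b => Fin.cases ?_ (fun t => ?_) b) b <;>
      simp [Fin.cycleRange_symm_succ]
  rw [hσ, det_permute', Equiv.Perm.decomposeFin.symm_sign]
  simp [Fin.sign_cycleRange]

theorem Complex.ofReal_det {ι : Type*} [Fintype ι] [DecidableEq ι] (M : Matrix ι ι ℝ) :
    ((M.det : ℝ) : ℂ) = (M.map (↑)).det :=
  Complex.ofRealHom.map_det M

def cmMatrix {m k : ℕ} (rsq : Fin m → ℝ) (ρsq : Fin m → Fin m → ℝ) (r c : Fin k → CMIdx m) :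
    Matrix (Fin k) (Fin k) ℝ :=
  of fun a b => cmEnt rsq ρsq (r a) (c b)

theorem cmMinor_ofFn {m k : ℕ} (rsq : Fin m → ℝ) (ρsq : Fin m → Fin m → ℝ)
    (r c : Fin k → CMIdx m) :
    cmMinor rsq ρsq (List.ofFn r) (List.ofFn c) = det (cmMatrix rsq ρsq r c) := by
  rw [cmMinor, dif_pos (by simp),
    ← det_submatrix_equiv_self (finCongr (List.length_ofFn (f := r)))]
  congr 1
  ext a b
  simp [cmMatrix, Fin.cast]

namespace CMIdx

def withZero {m k : ℕ} (p : Fin k → Fin m) : Fin (k + 1) → CMIdx m :=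
  vecCons zero fun t => pt (p t)

def withZeroStar {m k : ℕ} (p : Fin k → Fin m) : Fin (k + 2) → CMIdx m :=
  vecCons zero (vecCons star fun t => pt (p t))

end CMIdx

theorem det_cmMatrix_withZeroStar_comp_succAbove {m k : ℕ} (rsq : Fin m → ℝ)
    (ρsq : Fin m → Fin m → ℝ) (p : Fin (k + 1) → Fin m) (ν : Fin (k + 1)) :
    det (cmMatrix rsq ρsq (CMIdx.withZeroStar (p ∘ ν.succAbove))
        (CMIdx.withZero (Fin.cons (p ν) (p ∘ ν.succAbove)))) =
      (-1) ^ (ν : ℕ) * det ((cmMatrix rsq ρsq (CMIdx.withZeroStar p)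
        (CMIdx.withZeroStar p)).submatrix ν.succ.succ.succAbove (Fin.succAbove 1)) := by
  rw [← det_submatrix_cons_zero_cons_succ_succAbove]
  congr 1
  ext a b
  refine Fin.cases ?_ (fun a => Fin.cases ?_ (fun s => ?_) a) a <;>
    refine Fin.cases ?_ (fun b => Fin.cases ?_ (fun t => ?_) b) b <;>
    simp [cmMatrix, CMIdx.withZero, CMIdx.withZeroStar]

section sphere

variable {n m : ℕ} (α : Fin m → Fin n → ℝ) (α0 : Fin m → ℝ)

theorem sphereRsq_eq (j : Fin m) : sphereRsq α α0 j = α j ⬝ᵥ α j - α0 j := by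
  simp [sphereRsq, dotProduct, sq]

theorem sphereFun_eq (j : Fin m) (x : Fin n → ℂ) :
    sphereFun α α0 j x = x ⬝ᵥ x + 2 * ((fun ν => (α j ν : ℂ)) ⬝ᵥ x) + α0 j := by
  simp [sphereFun, dotProduct, sq]

theorem cmEnt_sphereRhosq_pt_pt (rsq : Fin m → ℝ) (j k : Fin m) :
    cmEnt rsq (sphereRhosq α) (.pt j) (.pt k) = α j ⬝ᵥ α j + α k ⬝ᵥ α k - 2 * (α j ⬝ᵥ α k) := by
  rw [cmEnt]
  split_ifs with hjk
  · subst hjk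
    ring
  · simp only [sphereRhosq, dotProduct, Finset.mul_sum, ← Finset.sum_add_distrib,
      ← Finset.sum_sub_distrib]
    exact Finset.sum_congr rfl fun ν _ => by ring

theorem det_cmMatrix_sphereRhosq_withZero_eq_zero (rsq : Fin m → ℝ) (p : Fin (n + 2) → Fin m) :
    det (cmMatrix rsq (sphereRhosq α) (CMIdx.withZero p) (CMIdx.withZero p)) = 0 := by
  let u : Fin (n + 3) → Fin (n + 2) → ℝ :=
    vecCons (vecCons 0 (vecCons 1 0))
      fun t => vecCons 1 (vecCons (α (p t) ⬝ᵥ α (p t)) (-2 • α (p t)))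
  let w : Fin (n + 3) → Fin (n + 2) → ℝ :=
    vecCons (vecCons 1 (vecCons 0 0))
      fun t => vecCons (α (p t) ⬝ᵥ α (p t)) (vecCons 1 (α (p t)))
  refine (congrArg det ?_).trans (det_of_dotProduct_eq_zero_of_card_lt u w (by simp))
  ext a b
  refine Fin.cases ?_ (fun s => ?_) a <;> refine Fin.cases ?_ (fun t => ?_) b <;>
    simp only [u, w, cmMatrix, CMIdx.withZero, of_apply, cons_val_zero, cons_val_succ,
      cons_dotProduct_cons, zero_dotProduct, dotProduct_zero, smul_dotProduct,
      cmEnt_sphereRhosq_pt_pt] <;>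
    (try simp only [cmEnt]) <;> ring

theorem det_updateCol_star_add_sphereFun_eq_zero (p : Fin (n + 2) → Fin m) (x : Fin n → ℂ) :
    det (((cmMatrix (sphereRsq α α0) (sphereRhosq α) (CMIdx.withZeroStar p)
      (CMIdx.withZeroStar p)).map (↑)).updateCol 1 fun i =>
        ((cmMatrix (sphereRsq α α0) (sphereRhosq α) (CMIdx.withZeroStar p)
          (CMIdx.withZeroStar p)).map (↑) : Matrix _ _ ℂ) i 1 +
          vecCons 0 (vecCons 0 fun t => sphereFun α α0 (p t) x) i) = 0 := by
  let a : Fin (n + 2) → Fin n → ℂ := fun t ν => α (p t) ν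
  -- The third coordinate only serves row `⋆`: it turns `Q(α_k)` into `r_k²` and `Q(x)` into `0`.
  let u : Fin (n + 4) → Fin (n + 3) → ℂ :=
    vecCons (vecCons 0 (vecCons 1 (vecCons 0 0)))
      (vecCons (vecCons 1 (vecCons 0 (vecCons (-1) 0)))
        fun t => vecCons 1 (vecCons (a t ⬝ᵥ a t) (vecCons 0 (-2 • a t))))
  let w : Fin (n + 4) → Fin (n + 3) → ℂ :=
    vecCons (vecCons 1 (vecCons 0 (vecCons 0 0)))
      (vecCons (vecCons (x ⬝ᵥ x) (vecCons 1 (vecCons (x ⬝ᵥ x) (-x))))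
        fun t => vecCons (a t ⬝ᵥ a t) (vecCons 1 (vecCons (α0 (p t) : ℂ) (a t))))
  refine (congrArg det ?_).trans (det_of_dotProduct_eq_zero_of_card_lt u w (by simp))
  ext i j
  refine Fin.cases ?_ (fun i => Fin.cases ?_ (fun s => ?_) i) i <;>
    refine Fin.cases ?_ (fun j => Fin.cases ?_ (fun t => ?_) j) j <;>
    simp only [u, w, cmMatrix, CMIdx.withZeroStar, updateCol_apply, map_apply, of_apply,
      Fin.succ_zero_eq_one, Fin.succ_succ_ne_one, Fin.zero_ne_one, if_true, if_false,
      cons_val_zero, cons_val_succ, cons_val_one, cons_dotProduct_cons, zero_dotProduct,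
      dotProduct_zero, dotProduct_neg, smul_dotProduct, cmEnt_sphereRhosq_pt_pt, sphereFun_eq] <;>
    (try simp only [cmEnt]) <;> push_cast [sphereRsq_eq, dotProduct, a] <;> ring

end sphere

theorem cm_partial_fraction_expansion_general (n m : ℕ)
    (α : Fin m → Fin n → ℝ) (α0 : Fin m → ℝ)
    (J : Fin (n + 2) → Fin m) :
    (cmMinor (sphereRsq α α0) (sphereRhosq α)
        (CMIdx.zero :: List.ofFn fun i => CMIdx.pt (J i))
        (CMIdx.zero :: List.ofFn fun i => CMIdx.pt (J i)) = 0) ∧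
    (∀ x : Fin n → ℂ,
      (cmMinor (sphereRsq α α0) (sphereRhosq α)
          (CMIdx.zero :: CMIdx.star :: List.ofFn fun i => CMIdx.pt (J i))
          (CMIdx.zero :: CMIdx.star :: List.ofFn fun i => CMIdx.pt (J i)) : ℂ) =
        ∑ ν : Fin (n + 2),
          (cmMinor (sphereRsq α α0) (sphereRhosq α)
              ([CMIdx.zero, CMIdx.star] ++
                List.ofFn fun t : Fin (n + 1) => CMIdx.pt (J (ν.succAbove t)))
              ([CMIdx.zero, CMIdx.pt (J ν)] ++
                List.ofFn fun t : Fin (n + 1) => CMIdx.pt (J (ν.succAbove t))) : ℂ) *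
            sphereFun α α0 (J ν) x) := by
  refine ⟨?_, fun x => ?_⟩
  · rw [← List.ofFn_cons, cmMinor_ofFn]
    exact det_cmMatrix_sphereRhosq_withZero_eq_zero α _ J
  · set M := cmMatrix (sphereRsq α α0) (sphereRhosq α) (CMIdx.withZeroStar J)
      (CMIdx.withZeroStar J)
    have hB : cmMinor (sphereRsq α α0) (sphereRhosq α)
        (CMIdx.zero :: CMIdx.star :: List.ofFn fun i => CMIdx.pt (J i))
        (CMIdx.zero :: CMIdx.star :: List.ofFn fun i => CMIdx.pt (J i)) = det M := by
      rw [← List.ofFn_cons, ← List.ofFn_cons, cmMinor_ofFn]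
      rfl
    rw [hB, Complex.ofReal_det, det_eq_sum_of_det_updateCol_add_eq_zero _ _
      (det_updateCol_star_add_sphereFun_eq_zero α α0 J x)]
    refine Finset.sum_congr rfl fun ν _ => ?_
    have hminor : cmMinor (sphereRsq α α0) (sphereRhosq α)
        ([CMIdx.zero, CMIdx.star] ++ List.ofFn fun t => CMIdx.pt (J (ν.succAbove t)))
        ([CMIdx.zero, CMIdx.pt (J ν)] ++ List.ofFn fun t => CMIdx.pt (J (ν.succAbove t))) =
        (-1) ^ (ν : ℕ) * det (M.submatrix ν.succ.succ.succAbove (Fin.succAbove 1)) := by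
      rw [← det_cmMatrix_withZeroStar_comp_succAbove, ← cmMinor_ofFn]
      simp [CMIdx.withZeroStar, CMIdx.withZero, List.ofFn_succ]
    rw [hminor, submatrix_map, ← Complex.ofReal_det]
    push_cast
    ring

/-- For `n+2` spheres in `ℂⁿ` (formula (48) of Aomoto–Machida):
(i) `B(0J) = 0`, and (ii) for every `x ∈ ℂⁿ`,
`B(0⋆J) = Σ_{ν=1}^{n+2} B(0 ⋆ ∂_{j_ν}J ; 0 j_ν ∂_{j_ν}J) · f_{j_ν}(x)`. -/
theorem cm_partial_fraction_expansion (n m : ℕ) (hm : n + 2 ≤ m)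
    (α : Fin m → Fin n → ℝ) (α0 : Fin m → ℝ)
    (J : Fin (n + 2) → Fin m) (hJ : Function.Injective J) :
    (cmMinor (sphereRsq α α0) (sphereRhosq α)
        (CMIdx.zero :: List.ofFn fun i => CMIdx.pt (J i))
        (CMIdx.zero :: List.ofFn fun i => CMIdx.pt (J i)) = 0) ∧
    (∀ x : Fin n → ℂ,
      (cmMinor (sphereRsq α α0) (sphereRhosq α)
          (CMIdx.zero :: CMIdx.star :: List.ofFn fun i => CMIdx.pt (J i))
          (CMIdx.zero :: CMIdx.star :: List.ofFn fun i => CMIdx.pt (J i)) : ℂ) =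
        ∑ ν : Fin (n + 2),
          (cmMinor (sphereRsq α α0) (sphereRhosq α)
              ([CMIdx.zero, CMIdx.star] ++
                List.ofFn fun t : Fin (n + 1) => CMIdx.pt (J (ν.succAbove t)))
              ([CMIdx.zero, CMIdx.pt (J ν)] ++
                List.ofFn fun t : Fin (n + 1) => CMIdx.pt (J (ν.succAbove t))) : ℂ) *
            sphereFun α α0 (J ν) x) :=
  cm_partial_fraction_expansion_general n m α α0 J
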